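/- (One-step L¹-Lipschitz continuity in time.) Assume hypothesis (H2), that Σ_{j∈ℤ} |ρ_{j+1} − ρ_j| < ∞, and that the CFL condition λ ≤ min{(8 − 27α)/(27L), 2/(27L), α/L} holds. Then Δx·Σ_{j∈ℤ} |ρ'_j − ρ_j| ≤ Δt·((1/λ)·Σ_{j∈ℤ} |ρ_{j+1} − ρ_j| + J), where J := M·(sup |μ'|)·(1 + θ)²·m²·(α + λ·L + (1 + λ·L)²). -/

import Mathlib

/-!
The update is conservative, `ρ'_j - ρ_j = -λ (F_{j+1/2} - F_{j-1/2})`, and the flux difference is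
controlled by two things. The jumps of the mid-time values across an interface: both minmod slopes
next to the interface are limited by the jump of `ρ` across it, which gives `(1 + θ) |ρ_j - ρ_{j-1}|`
plus `λ/2` times the jumps of `f` in the half step. And the variation in `j` of the mid-time
convolution: the mid-time values have total mass at most `(1 + λL) m` (the reconstruction stays
nonnegative since `θ ≤ 1/2`), so that variation is at most `C' Δx² (1 + λL) m` with `C' = sup |μ'|`.
Summing over `j`, the CFL condition `λL + α ≤ 8/27` makes the coefficient of the total variation
at most `1`, and `TV ≤ 2m` absorbs the remaining terms into `J`.
-/

open MeasureTheory

noncomputable section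

/-- minmod limiter of three arguments. -/
def minmod3 (a b c : ℝ) : ℝ :=
  if 0 < a ∧ 0 < b ∧ 0 < c then min a (min b c)
  else if a < 0 ∧ b < 0 ∧ c < 0 then max a (max b c)
  else 0

/-- MUSCL slopes `σ_j = 2θ·minmod(ρ_j − ρ_{j−1}, (ρ_{j+1} − ρ_{j−1})/2, ρ_{j+1} − ρ_j)`. -/
def slp (θ : ℝ) (ρ : ℤ → ℝ) (j : ℤ) : ℝ :=
  2 * θ * minmod3 (ρ j - ρ (j - 1)) ((ρ (j + 1) - ρ (j - 1)) / 2) (ρ (j + 1) - ρ j)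

/-- left interface value `ρ⁻_{j+1/2} = ρ_j + σ_j/2`. -/
def intL (θ : ℝ) (ρ : ℤ → ℝ) (j : ℤ) : ℝ := ρ j + slp θ ρ j / 2

/-- right interface value `ρ⁺_{j−1/2} = ρ_j − σ_j/2`. -/
def intR (θ : ℝ) (ρ : ℤ → ℝ) (j : ℤ) : ℝ := ρ j - slp θ ρ j / 2

/-- discrete convolution `A_j = Δx·Σ_l μ((j−l)Δx)·ρ_l`. -/
def Adisc (μ : ℝ → ℝ) (Δx : ℝ) (ρ : ℤ → ℝ) (j : ℤ) : ℝ :=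
  Δx * ∑' l : ℤ, μ (((j : ℝ) - (l : ℝ)) * Δx) * ρ l

/-- `s_j = θ·(A_{j+1} − A_{j−1})`. -/
def sdisc (μ : ℝ → ℝ) (θ Δx : ℝ) (ρ : ℤ → ℝ) (j : ℤ) : ℝ :=
  θ * (Adisc μ Δx ρ (j + 1) - Adisc μ Δx ρ (j - 1))

/-- `A⁻_{j+1/2} = A_j + s_j/2`. -/
def AdiscL (μ : ℝ → ℝ) (θ Δx : ℝ) (ρ : ℤ → ℝ) (j : ℤ) : ℝ :=
  Adisc μ Δx ρ j + sdisc μ θ Δx ρ j / 2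

/-- `A⁺_{j−1/2} = A_j − s_j/2`. -/
def AdiscR (μ : ℝ → ℝ) (θ Δx : ℝ) (ρ : ℤ → ℝ) (j : ℤ) : ℝ :=
  Adisc μ Δx ρ j - sdisc μ θ Δx ρ j / 2

/-- mid-time value `ρ^{½,−}_{j+1/2}`. -/
def midL (f : ℝ → ℝ → ℝ) (μ : ℝ → ℝ) (θ lam Δx : ℝ) (ρ : ℤ → ℝ) (j : ℤ) : ℝ :=
  intL θ ρ j - lam / 2 *
    (f (intL θ ρ j) (AdiscL μ θ Δx ρ j) - f (intR θ ρ j) (AdiscR μ θ Δx ρ j))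

/-- mid-time value `ρ^{½,+}_{j−1/2}`. -/
def midR (f : ℝ → ℝ → ℝ) (μ : ℝ → ℝ) (θ lam Δx : ℝ) (ρ : ℤ → ℝ) (j : ℤ) : ℝ :=
  intR θ ρ j - lam / 2 *
    (f (intL θ ρ j) (AdiscL μ θ Δx ρ j) - f (intR θ ρ j) (AdiscR μ θ Δx ρ j))

/-- mid-time convolution `A^{½}_{j+1/2}`. -/
def Amid (f : ℝ → ℝ → ℝ) (μ : ℝ → ℝ) (θ lam Δx : ℝ) (ρ : ℤ → ℝ) (j : ℤ) : ℝ :=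
  Δx / 2 * ∑' l : ℤ,
    (μ (((j : ℝ) + 1 - (l : ℝ)) * Δx) * midR f μ θ lam Δx ρ l +
     μ (((j : ℝ) - (l : ℝ)) * Δx) * midL f μ θ lam Δx ρ l)

/-- Lax–Friedrichs type numerical flux `F(u,v,A)`. -/
def numFlux (f : ℝ → ℝ → ℝ) (α lam u v A : ℝ) : ℝ :=
  (f u A + f v A) / 2 - α * (v - u) / (2 * lam)

/-- MUSCL–Hancock update `ρ'_j`. -/
def mhUpdate (f : ℝ → ℝ → ℝ) (μ : ℝ → ℝ) (θ α lam Δx : ℝ) (ρ : ℤ → ℝ) (j : ℤ) : ℝ :=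
  ρ j - lam *
    (numFlux f α lam (midL f μ θ lam Δx ρ j) (midR f μ θ lam Δx ρ (j + 1))
        (Amid f μ θ lam Δx ρ j) -
     numFlux f α lam (midL f μ θ lam Δx ρ (j - 1)) (midR f μ θ lam Δx ρ j)
        (Amid f μ θ lam Δx ρ (j - 1)))


open Set

lemma minmod3_mem_uIcc_left (a b c : ℝ) : minmod3 a b c ∈ uIcc 0 a := by
  unfold minmod3
  split_ifs with hpos hneg
  · exact mem_uIcc_of_le (le_min hpos.1.le (le_min hpos.2.1.le hpos.2.2.le)) (min_le_left _ _)
  · exact mem_uIcc_of_ge (le_max_left _ _) (max_le hneg.1.le (max_le hneg.2.1.le hneg.2.2.le))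
  · exact left_mem_uIcc

lemma minmod3_mem_uIcc_right (a b c : ℝ) : minmod3 a b c ∈ uIcc 0 c := by
  unfold minmod3
  split_ifs with hpos hneg
  · exact mem_uIcc_of_le (le_min hpos.1.le (le_min hpos.2.1.le hpos.2.2.le))
      ((min_le_right _ _).trans (min_le_right _ _))
  · exact mem_uIcc_of_ge ((le_max_right _ _).trans (le_max_right _ _))
      (max_le hneg.1.le (max_le hneg.2.1.le hneg.2.2.le))
  · exact left_mem_uIcc

lemma const_mul_mem_uIcc_zero {x d : ℝ} (k : ℝ) (hx : x ∈ uIcc 0 d) : k * x ∈ uIcc 0 (k * d) := by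
  simpa using mem_image_of_mem (k * ·) hx

lemma abs_le_abs_of_mem_uIcc_zero {x d : ℝ} (hx : x ∈ uIcc 0 d) : |x| ≤ |d| := by
  simpa using abs_sub_left_of_mem_uIcc hx

lemma abs_sub_le_abs_of_mem_uIcc_zero {x y d : ℝ} (hx : x ∈ uIcc 0 d) (hy : y ∈ uIcc 0 d) :
    |x - y| ≤ |d| := by
  simpa using abs_sub_le_of_uIcc_subset_uIcc (uIcc_subset_uIcc hy hx)

lemma add_half_mem_of_mem_uIcc {u v x θ : ℝ} (hu : 0 ≤ u) (hv : 0 ≤ v) (hθ0 : 0 ≤ θ)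
    (hθ1 : θ ≤ 1 / 2) (hx : x ∈ uIcc 0 (2 * θ * (v - u))) :
    u + x / 2 ∈ Icc 0 (u + θ * |v - u|) := by
  have hbound : |x| ≤ 2 * θ * |v - u| := by
    simpa [abs_mul, abs_of_nonneg hθ0] using abs_le_abs_of_mem_uIcc_zero hx
  refine ⟨?_, by linarith [le_abs_self x]⟩
  rcases mem_uIcc.1 hx with ⟨hx0, -⟩ | ⟨hdx, -⟩
  · linarith
  · nlinarith

lemma abs_sub_le_of_abs_deriv_le {g : ℝ → ℝ} (hg : Differentiable ℝ g) {C : ℝ}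
    (hC : ∀ x, |deriv g x| ≤ C) (u v : ℝ) : |g u - g v| ≤ C * |u - v| := by
  simpa [Real.norm_eq_abs] using convex_univ.norm_image_sub_le_of_norm_deriv_le
    (fun x _ => hg x) (fun x _ => by simpa [Real.norm_eq_abs] using hC x)
    (mem_univ v) (mem_univ u)

lemma summable_mul_of_abs_le {g w W : ℤ → ℝ} {B : ℝ} (hg : ∀ l, |g l| ≤ B)
    (hw : ∀ l, |w l| ≤ W l) (hW : Summable W) : Summable (fun l => g l * w l) :=
  (hW.mul_left B).of_norm_bounded fun l => by
    rw [Real.norm_eq_abs, abs_mul]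
    exact mul_le_mul (hg l) (hw l) (abs_nonneg _) ((abs_nonneg _).trans (hg l))

lemma abs_tsum_sub_tsum_le {a b W : ℤ → ℝ} {S : ℝ} (ha : Summable a) (hb : Summable b)
    (hW : HasSum W S) (h : ∀ l, |a l - b l| ≤ W l) : |∑' l, a l - ∑' l, b l| ≤ S := by
  rw [← ha.tsum_sub hb]
  exact tsum_of_norm_bounded hW fun l => (Real.norm_eq_abs _).trans_le (h l)

lemma hasSum_comp_add_int {g : ℤ → ℝ} {a : ℝ} (h : HasSum g a) (k : ℤ) :
    HasSum (fun j => g (j + k)) a :=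
  (Equiv.addRight k).hasSum_iff.2 h

lemma hasSum_comp_sub_int {g : ℤ → ℝ} {a : ℝ} (h : HasSum g a) (k : ℤ) :
    HasSum (fun j => g (j - k)) a :=
  (Equiv.subRight k).hasSum_iff.2 h

lemma abs_succ_sub_le_add {ρ : ℤ → ℝ} (hρ : 0 ≤ ρ) (j : ℤ) : |ρ (j + 1) - ρ j| ≤ ρ (j + 1) + ρ j :=
  (abs_sub _ _).trans_eq (by rw [abs_of_nonneg (hρ _), abs_of_nonneg (hρ _)])

lemma summable_abs_succ_sub {ρ : ℤ → ℝ} {m : ℝ} (hρ : 0 ≤ ρ) (hm : HasSum ρ m) :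
    Summable (fun j => |ρ (j + 1) - ρ j|) :=
  ((hasSum_comp_add_int hm 1).add hm).summable.of_nonneg_of_le (fun _ => abs_nonneg _)
    (abs_succ_sub_le_add hρ)

lemma tsum_abs_succ_sub_le {ρ : ℤ → ℝ} {m : ℝ} (hρ : 0 ≤ ρ) (hm : HasSum ρ m) :
    ∑' j, |ρ (j + 1) - ρ j| ≤ 2 * m := by
  simpa [two_mul] using hasSum_le (abs_succ_sub_le_add hρ)
    (summable_abs_succ_sub hρ hm).hasSum ((hasSum_comp_add_int hm 1).add hm)

section Reconstruction

variable {θ : ℝ} {ρ : ℤ → ℝ}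

lemma slp_mem_uIcc_left (θ : ℝ) (ρ : ℤ → ℝ) (j : ℤ) :
    slp θ ρ j ∈ uIcc 0 (2 * θ * (ρ j - ρ (j - 1))) :=
  const_mul_mem_uIcc_zero _ (minmod3_mem_uIcc_left _ _ _)

lemma slp_mem_uIcc_right (θ : ℝ) (ρ : ℤ → ℝ) (j : ℤ) :
    slp θ ρ j ∈ uIcc 0 (2 * θ * (ρ (j + 1) - ρ j)) :=
  const_mul_mem_uIcc_zero _ (minmod3_mem_uIcc_right _ _ _)

lemma abs_slp_le (hθ0 : 0 ≤ θ) (j : ℤ) : |slp θ ρ j| ≤ 2 * θ * |ρ (j + 1) - ρ j| := by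
  simpa [abs_mul, abs_of_nonneg hθ0] using abs_le_abs_of_mem_uIcc_zero (slp_mem_uIcc_right θ ρ j)

/-- Both slopes adjacent to the interface `j - 1/2` are limited by the same jump. -/
lemma abs_slp_sub_slp_le (hθ0 : 0 ≤ θ) (j : ℤ) :
    |slp θ ρ j - slp θ ρ (j - 1)| ≤ 2 * θ * |ρ j - ρ (j - 1)| := by
  have hprev := slp_mem_uIcc_right θ ρ (j - 1)
  rw [sub_add_cancel] at hprev
  simpa [abs_mul, abs_of_nonneg hθ0] using
    abs_sub_le_abs_of_mem_uIcc_zero (slp_mem_uIcc_left θ ρ j) hprev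

lemma intL_nonneg (hρ : 0 ≤ ρ) (hθ0 : 0 ≤ θ) (hθ1 : θ ≤ 1 / 2) (j : ℤ) : 0 ≤ intL θ ρ j :=
  (add_half_mem_of_mem_uIcc (hρ j) (hρ (j + 1)) hθ0 hθ1 (slp_mem_uIcc_right θ ρ j)).1

lemma intR_mem_Icc (hρ : 0 ≤ ρ) (hθ0 : 0 ≤ θ) (hθ1 : θ ≤ 1 / 2) (j : ℤ) :
    intR θ ρ j ∈ Icc 0 (ρ j + θ * |ρ j - ρ (j - 1)|) := by
  have hneg := const_mul_mem_uIcc_zero (-1) (slp_mem_uIcc_left θ ρ j)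
  rw [show -1 * (2 * θ * (ρ j - ρ (j - 1))) = 2 * θ * (ρ (j - 1) - ρ j) by ring] at hneg
  have h := add_half_mem_of_mem_uIcc (hρ j) (hρ (j - 1)) hθ0 hθ1 hneg
  rw [abs_sub_comm] at h
  simpa [intR, sub_eq_add_neg, neg_div] using h

lemma intL_add_intR (θ : ℝ) (ρ : ℤ → ℝ) (j : ℤ) : intL θ ρ j + intR θ ρ j = 2 * ρ j := by
  unfold intL intR; ring

lemma intL_sub_intR (θ : ℝ) (ρ : ℤ → ℝ) (j : ℤ) : intL θ ρ j - intR θ ρ j = slp θ ρ j := by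
  unfold intL intR; ring

lemma abs_intL_sub_intL_le (hθ0 : 0 ≤ θ) (j : ℤ) :
    |intL θ ρ j - intL θ ρ (j - 1)| ≤ (1 + θ) * |ρ j - ρ (j - 1)| := by
  have h : intL θ ρ j - intL θ ρ (j - 1) =
      (ρ j - ρ (j - 1)) + (slp θ ρ j - slp θ ρ (j - 1)) / 2 := by unfold intL; ring
  rw [h]
  refine (abs_add_le _ _).trans ?_
  rw [abs_div, abs_two]
  linarith [abs_slp_sub_slp_le (ρ := ρ) hθ0 j]

lemma abs_intR_sub_intR_le (hθ0 : 0 ≤ θ) (j : ℤ) :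
    |intR θ ρ (j + 1) - intR θ ρ j| ≤ (1 + θ) * |ρ (j + 1) - ρ j| := by
  have hslp := abs_slp_sub_slp_le (ρ := ρ) hθ0 (j + 1)
  rw [add_sub_cancel_right] at hslp
  have h : intR θ ρ (j + 1) - intR θ ρ j =
      (ρ (j + 1) - ρ j) - (slp θ ρ (j + 1) - slp θ ρ j) / 2 := by unfold intR; ring
  rw [h]
  refine (abs_sub _ _).trans ?_
  rw [abs_div, abs_two]
  linarith

end Reconstruction

section Convolution

variable {μ : ℝ → ℝ} {Δx C' B m : ℝ} {ρ : ℤ → ℝ}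

lemma abs_sub_comp_mul_le (hΔx : 0 < Δx) (hμL : ∀ x y, |μ x - μ y| ≤ C' * |x - y|) (a b : ℝ) :
    |μ (a * Δx) - μ (b * Δx)| ≤ C' * |a - b| * Δx := by
  simpa [← sub_mul, abs_mul, abs_of_pos hΔx, mul_assoc] using hμL (a * Δx) (b * Δx)

lemma abs_Adisc_sub_Adisc_le (hΔx : 0 < Δx) (hρ : 0 ≤ ρ) (hm : HasSum ρ m)
    (hμB : ∀ x, |μ x| ≤ B) (hμL : ∀ x y, |μ x - μ y| ≤ C' * |x - y|) (j k : ℤ) :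
    |Adisc μ Δx ρ j - Adisc μ Δx ρ k| ≤ C' * |(j : ℝ) - k| * Δx ^ 2 * m := by
  have hsum (x : ℝ) : Summable (fun l : ℤ => μ ((x - l) * Δx) * ρ l) :=
    summable_mul_of_abs_le (fun _ => hμB _) (fun l => (abs_of_nonneg (hρ l)).le) hm.summable
  have hterm (l : ℤ) : |μ ((j - l) * Δx) * ρ l - μ ((k - l) * Δx) * ρ l| ≤
      C' * |(j : ℝ) - k| * Δx * ρ l := by
    rw [← sub_mul, abs_mul, abs_of_nonneg (hρ l)]
    have h := abs_sub_comp_mul_le hΔx hμL (j - l) (k - l)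
    rw [sub_sub_sub_cancel_right] at h
    exact mul_le_mul_of_nonneg_right h (hρ l)
  have h := abs_tsum_sub_tsum_le (hsum j) (hsum k) (hm.mul_left _) hterm
  unfold Adisc
  rw [← mul_sub, abs_mul, abs_of_pos hΔx]
  calc Δx * |_| ≤ Δx * (C' * |(j : ℝ) - k| * Δx * m) := mul_le_mul_of_nonneg_left h hΔx.le
    _ = C' * |(j : ℝ) - k| * Δx ^ 2 * m := by ring

lemma abs_sdisc_le {θ : ℝ} (hθ0 : 0 ≤ θ) (hΔx : 0 < Δx) (hρ : 0 ≤ ρ) (hm : HasSum ρ m)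
    (hμB : ∀ x, |μ x| ≤ B) (hμL : ∀ x y, |μ x - μ y| ≤ C' * |x - y|) (j : ℤ) :
    |sdisc μ θ Δx ρ j| ≤ 2 * θ * (C' * Δx ^ 2 * m) := by
  have h := abs_Adisc_sub_Adisc_le hΔx hρ hm hμB hμL (j + 1) (j - 1)
  rw [show ((j + 1 : ℤ) : ℝ) - ((j - 1 : ℤ) : ℝ) = 2 by push_cast; ring, abs_two] at h
  rw [sdisc, abs_mul, abs_of_nonneg hθ0]
  nlinarith

lemma abs_Amid_sub_Amid_le {f : ℝ → ℝ → ℝ} {θ lam S : ℝ} {W : ℤ → ℝ} (hΔx : 0 < Δx)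
    (hμB : ∀ x, |μ x| ≤ B) (hμL : ∀ x y, |μ x - μ y| ≤ C' * |x - y|) (hW : HasSum W S)
    (hmid : ∀ l, |midL f μ θ lam Δx ρ l| + |midR f μ θ lam Δx ρ l| ≤ W l) (j : ℤ) :
    |Amid f μ θ lam Δx ρ j - Amid f μ θ lam Δx ρ (j - 1)| ≤ C' * Δx ^ 2 * S / 2 := by
  set p := midL f μ θ lam Δx ρ
  set q := midR f μ θ lam Δx ρ
  have hsum (x : ℝ) : Summable (fun l : ℤ => μ ((x + 1 - l) * Δx) * q l + μ ((x - l) * Δx) * p l) :=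
    (summable_mul_of_abs_le (fun _ => hμB _)
        (fun l => by linarith [hmid l, abs_nonneg (p l)]) hW.summable).add
      (summable_mul_of_abs_le (fun _ => hμB _)
        (fun l => by linarith [hmid l, abs_nonneg (q l)]) hW.summable)
  have hterm (l : ℤ) : |(μ ((j + 1 - l) * Δx) * q l + μ ((j - l) * Δx) * p l) -
      (μ ((((j - 1 : ℤ) : ℝ) + 1 - l) * Δx) * q l + μ ((((j - 1 : ℤ) : ℝ) - l) * Δx) * p l)| ≤
      C' * Δx * W l := by
    have hq := abs_sub_comp_mul_le hΔx hμL (j + 1 - l) (((j - 1 : ℤ) : ℝ) + 1 - l)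
    have hp := abs_sub_comp_mul_le hΔx hμL (j - l) (((j - 1 : ℤ) : ℝ) - l)
    have hone : |(j : ℝ) + 1 - l - ((((j - 1 : ℤ) : ℝ)) + 1 - l)| = 1 := by push_cast; norm_num
    have hone' : |(j : ℝ) - l - ((((j - 1 : ℤ) : ℝ)) - l)| = 1 := by push_cast; norm_num
    rw [hone, mul_one] at hq
    rw [hone', mul_one] at hp
    calc _ = |(μ ((j + 1 - l) * Δx) - μ ((((j - 1 : ℤ) : ℝ) + 1 - l) * Δx)) * q l +
            (μ ((j - l) * Δx) - μ ((((j - 1 : ℤ) : ℝ) - l) * Δx)) * p l| := by ring_nf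
      _ ≤ C' * Δx * |q l| + C' * Δx * |p l| := by
        refine (abs_add_le _ _).trans (add_le_add ?_ ?_) <;> rw [abs_mul] <;>
          exact mul_le_mul_of_nonneg_right ‹_› (abs_nonneg _)
      _ ≤ C' * Δx * W l := by
        have hC' : 0 ≤ C' * Δx := (abs_nonneg _).trans hp
        nlinarith [hmid l]
  have h := abs_tsum_sub_tsum_le (hsum j) (hsum ((j - 1 : ℤ) : ℝ)) (hW.mul_left _) hterm
  unfold Amid
  rw [← mul_sub, abs_mul, abs_of_pos (half_pos hΔx)]
  calc Δx / 2 * |_| ≤ Δx / 2 * (C' * Δx * S) := mul_le_mul_of_nonneg_left h (half_pos hΔx).le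
    _ = C' * Δx ^ 2 * S / 2 := by ring

end Convolution

/-- `f(ρ⁻_{j+1/2}, A⁻_{j+1/2}) − f(ρ⁺_{j−1/2}, A⁺_{j−1/2})`, so that `midL = intL − λ/2 · fluxJump`
and `midR = intR − λ/2 · fluxJump`. -/
def fluxJump (f : ℝ → ℝ → ℝ) (μ : ℝ → ℝ) (θ Δx : ℝ) (ρ : ℤ → ℝ) (j : ℤ) : ℝ :=
  f (intL θ ρ j) (AdiscL μ θ Δx ρ j) - f (intR θ ρ j) (AdiscR μ θ Δx ρ j)

def fluxJumpBound (θ L M K : ℝ) (ρ : ℤ → ℝ) (j : ℤ) : ℝ :=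
  2 * θ * L * |ρ (j + 1) - ρ j| + 2 * θ * M * K * (ρ j + θ * |ρ j - ρ (j - 1)|)

section Flux

variable {f : ℝ → ℝ → ℝ} {μ : ℝ → ℝ} {θ α lam Δx L M : ℝ} {ρ : ℤ → ℝ}

lemma abs_sub_le_of_lipschitz (hfL : ∀ u v A, |f u A - f v A| ≤ L * |u - v|)
    (hfM : ∀ r a b, |f r a - f r b| ≤ M * |r| * |a - b|) (u v A B : ℝ) :
    |f u A - f v B| ≤ L * |u - v| + M * |v| * |A - B| :=
  (abs_sub_le _ (f v A) _).trans (add_le_add (hfL u v A) (hfM v A B))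

lemma abs_fluxJump_le (hfL : ∀ u v A, |f u A - f v A| ≤ L * |u - v|)
    (hfM : ∀ r a b, |f r a - f r b| ≤ M * |r| * |a - b|) (hL0 : 0 ≤ L) (hM0 : 0 ≤ M)
    (hρ : 0 ≤ ρ) (hθ0 : 0 ≤ θ) (hθ1 : θ ≤ 1 / 2) {K : ℝ} {j : ℤ}
    (hs : |sdisc μ θ Δx ρ j| ≤ 2 * θ * K) :
    |fluxJump f μ θ Δx ρ j| ≤ fluxJumpBound θ L M K ρ j := by
  have hR := intR_mem_Icc hρ hθ0 hθ1 j
  have h := abs_sub_le_of_lipschitz hfL hfM (intL θ ρ j) (intR θ ρ j)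
    (AdiscL μ θ Δx ρ j) (AdiscR μ θ Δx ρ j)
  rw [intL_sub_intR, show AdiscL μ θ Δx ρ j - AdiscR μ θ Δx ρ j = sdisc μ θ Δx ρ j by
    unfold AdiscL AdiscR; ring, abs_of_nonneg hR.1] at h
  refine h.trans (add_le_add ?_ ?_)
  · nlinarith [abs_slp_le (ρ := ρ) hθ0 j]
  · have := mul_le_mul_of_nonneg_left (mul_le_mul hR.2 hs (abs_nonneg _) (hR.1.trans hR.2)) hM0
    linarith

lemma abs_fluxJump_le_two_mul (hfL : ∀ u v A, |f u A - f v A| ≤ L * |u - v|)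
    (hf0 : ∀ A, f 0 A = 0) (hρ : 0 ≤ ρ) (hθ0 : 0 ≤ θ) (hθ1 : θ ≤ 1 / 2) (j : ℤ) :
    |fluxJump f μ θ Δx ρ j| ≤ 2 * L * ρ j := by
  have habs (u A : ℝ) : |f u A| ≤ L * |u| := by simpa [hf0] using hfL u 0 A
  have hL := habs (intL θ ρ j) (AdiscL μ θ Δx ρ j)
  have hR := habs (intR θ ρ j) (AdiscR μ θ Δx ρ j)
  rw [abs_of_nonneg (intL_nonneg hρ hθ0 hθ1 j)] at hL
  rw [abs_of_nonneg (intR_mem_Icc hρ hθ0 hθ1 j).1] at hR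
  have := intL_add_intR θ ρ j
  exact (abs_sub _ _).trans (by linear_combination hL + hR + L * this)

lemma abs_midL_le (hlam : 0 ≤ lam) {j : ℤ} (hF : |fluxJump f μ θ Δx ρ j| ≤ 2 * L * ρ j)
    (hL : 0 ≤ intL θ ρ j) : |midL f μ θ lam Δx ρ j| ≤ intL θ ρ j + lam * L * ρ j := by
  change |intL θ ρ j - lam / 2 * fluxJump f μ θ Δx ρ j| ≤ _
  have h : |lam / 2 * fluxJump f μ θ Δx ρ j| ≤ lam * L * ρ j := by
    rw [abs_mul, abs_of_nonneg (by positivity : 0 ≤ lam / 2)]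
    nlinarith
  exact (abs_sub _ _).trans (by rw [abs_of_nonneg hL]; linarith)

lemma abs_midR_le (hlam : 0 ≤ lam) {j : ℤ} (hF : |fluxJump f μ θ Δx ρ j| ≤ 2 * L * ρ j)
    (hR : 0 ≤ intR θ ρ j) : |midR f μ θ lam Δx ρ j| ≤ intR θ ρ j + lam * L * ρ j := by
  change |intR θ ρ j - lam / 2 * fluxJump f μ θ Δx ρ j| ≤ _
  have h : |lam / 2 * fluxJump f μ θ Δx ρ j| ≤ lam * L * ρ j := by
    rw [abs_mul, abs_of_nonneg (by positivity : 0 ≤ lam / 2)]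
    nlinarith
  exact (abs_sub _ _).trans (by rw [abs_of_nonneg hR]; linarith)

lemma abs_sub_half_mul_sub_le {x x' F F' g g' lam : ℝ} (hlam : 0 ≤ lam)
    (hF : |F| ≤ g) (hF' : |F'| ≤ g') :
    |x - lam / 2 * F - (x' - lam / 2 * F')| ≤ |x - x'| + lam / 2 * (g + g') := by
  have h : |lam / 2 * (F - F')| ≤ lam / 2 * (g + g') := by
    rw [abs_mul, abs_of_nonneg (by positivity : 0 ≤ lam / 2)]
    exact mul_le_mul_of_nonneg_left ((abs_sub _ _).trans (add_le_add hF hF')) (by positivity)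
  calc _ = |(x - x') - lam / 2 * (F - F')| := by ring_nf
    _ ≤ _ := (abs_sub _ _).trans (by linarith)

lemma abs_numFlux_sub_numFlux_le (hfL : ∀ u v A, |f u A - f v A| ≤ L * |u - v|)
    (hfM : ∀ r a b, |f r a - f r b| ≤ M * |r| * |a - b|) (hα : 0 ≤ α) (hlam : 0 < lam)
    (uL uR A uL' uR' A' : ℝ) :
    |numFlux f α lam uL uR A - numFlux f α lam uL' uR' A'| ≤
      (L / 2 + α / (2 * lam)) * (|uL - uL'| + |uR - uR'|) +
        M * |A - A'| / 2 * (|uL'| + |uR'|) := by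
  have hL := abs_sub_le_of_lipschitz hfL hfM uL uL' A A'
  have hR := abs_sub_le_of_lipschitz hfL hfM uR uR' A A'
  have hvisc : |α / (2 * lam) * ((uR - uR') - (uL - uL'))| ≤
      α / (2 * lam) * (|uL - uL'| + |uR - uR'|) := by
    rw [abs_mul, abs_of_nonneg (by positivity)]
    exact mul_le_mul_of_nonneg_left ((abs_sub _ _).trans_eq (add_comm _ _)) (by positivity)
  have h : numFlux f α lam uL uR A - numFlux f α lam uL' uR' A' =
      (f uL A - f uL' A') / 2 + (f uR A - f uR' A') / 2 -
        α / (2 * lam) * ((uR - uR') - (uL - uL')) := by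
    unfold numFlux; field_simp; ring
  rw [h]
  refine (abs_sub _ _).trans ((add_le_add (abs_add_le _ _) le_rfl).trans ?_)
  rw [abs_div, abs_div, abs_two]
  linarith

end Flux

lemma abs_mhUpdate_sub_le {f : ℝ → ℝ → ℝ} {μ : ℝ → ℝ} {θ α lam Δx L M KA : ℝ} {ρ g a b : ℤ → ℝ}
    (hfL : ∀ u v A, |f u A - f v A| ≤ L * |u - v|)
    (hfM : ∀ r a b, |f r a - f r b| ≤ M * |r| * |a - b|) (hL0 : 0 ≤ L) (hM0 : 0 ≤ M)
    (hα : 0 ≤ α) (hlam : 0 < lam) (hθ0 : 0 ≤ θ)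
    (hg : ∀ j, |fluxJump f μ θ Δx ρ j| ≤ g j) (ha : ∀ j, |midL f μ θ lam Δx ρ j| ≤ a j)
    (hb : ∀ j, |midR f μ θ lam Δx ρ j| ≤ b j)
    (hA : ∀ j, |Amid f μ θ lam Δx ρ j - Amid f μ θ lam Δx ρ (j - 1)| ≤ KA) (j : ℤ) :
    |mhUpdate f μ θ α lam Δx ρ j - ρ j| ≤ lam * ((L / 2 + α / (2 * lam)) *
      ((1 + θ) * (|ρ j - ρ (j - 1)| + |ρ (j + 1) - ρ j|) +
        lam / 2 * (g (j - 1) + 2 * g j + g (j + 1))) + M * KA / 2 * (a (j - 1) + b j)) := by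
  have hupd : mhUpdate f μ θ α lam Δx ρ j - ρ j = -(lam *
      (numFlux f α lam (midL f μ θ lam Δx ρ j) (midR f μ θ lam Δx ρ (j + 1))
          (Amid f μ θ lam Δx ρ j) -
        numFlux f α lam (midL f μ θ lam Δx ρ (j - 1)) (midR f μ θ lam Δx ρ j)
          (Amid f μ θ lam Δx ρ (j - 1)))) := by
    unfold mhUpdate; ring
  rw [hupd, abs_neg, abs_mul, abs_of_pos hlam]
  refine mul_le_mul_of_nonneg_left
    ((abs_numFlux_sub_numFlux_le hfL hfM hα hlam _ _ _ _ _ _).trans ?_) hlam.le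
  have hjumpL : |midL f μ θ lam Δx ρ j - midL f μ θ lam Δx ρ (j - 1)| ≤
      (1 + θ) * |ρ j - ρ (j - 1)| + lam / 2 * (g j + g (j - 1)) := by
    have h := abs_sub_half_mul_sub_le (x := intL θ ρ j) (x' := intL θ ρ (j - 1)) hlam.le
      (hg j) (hg (j - 1))
    exact h.trans (by linarith [abs_intL_sub_intL_le (ρ := ρ) hθ0 j])
  have hjumpR : |midR f μ θ lam Δx ρ (j + 1) - midR f μ θ lam Δx ρ j| ≤
      (1 + θ) * |ρ (j + 1) - ρ j| + lam / 2 * (g (j + 1) + g j) := by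
    have h := abs_sub_half_mul_sub_le (x := intR θ ρ (j + 1)) (x' := intR θ ρ j) hlam.le
      (hg (j + 1)) (hg j)
    exact h.trans (by linarith [abs_intR_sub_intR_le (ρ := ρ) hθ0 j])
  refine add_le_add (mul_le_mul_of_nonneg_left (by linarith) (by positivity)) ?_
  have hKA : 0 ≤ KA := (abs_nonneg _).trans (hA 0)
  gcongr
  · exact hA j
  · exact ha (j - 1)
  · exact hb j

lemma tsum_abs_mhUpdate_sub_le {f : ℝ → ℝ → ℝ} {μ : ℝ → ℝ} {θ α lam Δx L M C' B m : ℝ}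
    {ρ : ℤ → ℝ} (hΔx : 0 < Δx) (hlam : 0 < lam) (hθ0 : 0 ≤ θ) (hθ1 : θ ≤ 1 / 2) (hα : 0 ≤ α)
    (hL0 : 0 ≤ L) (hM0 : 0 ≤ M) (hρ : 0 ≤ ρ) (hm : HasSum ρ m)
    (hfL : ∀ u v A, |f u A - f v A| ≤ L * |u - v|)
    (hfM : ∀ r a b, |f r a - f r b| ≤ M * |r| * |a - b|) (hf0 : ∀ A, f 0 A = 0)
    (hμB : ∀ x, |μ x| ≤ B) (hμL : ∀ x y, |μ x - μ y| ≤ C' * |x - y|) :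
    ∑' j, |mhUpdate f μ θ α lam Δx ρ j - ρ j| ≤
      (lam * L + α) * (1 + θ + 2 * θ * (lam * L)) * ∑' j, |ρ (j + 1) - ρ j| +
        lam * (lam * L + α) * (2 * θ * M * (C' * Δx ^ 2 * m) *
          (m + θ * ∑' j, |ρ (j + 1) - ρ j|)) +
        lam * M * (C' * Δx ^ 2 * m) * (1 + lam * L) ^ 2 * m := by
  set K := C' * Δx ^ 2 * m
  set TV := ∑' j, |ρ (j + 1) - ρ j|
  have hD : HasSum (fun j => |ρ (j + 1) - ρ j|) TV := (summable_abs_succ_sub hρ hm).hasSum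
  have hD' : HasSum (fun j => |ρ j - ρ (j - 1)|) TV := by
    simpa only [sub_add_cancel] using hasSum_comp_sub_int hD 1
  have hIL := intL_nonneg hρ hθ0 hθ1
  have hIR j := (intR_mem_Icc hρ hθ0 hθ1 j).1
  have hSL : Summable (intL θ ρ) := (hm.summable.mul_left 2).of_nonneg_of_le hIL
    fun j => by linarith [intL_add_intR θ ρ j, hIR j]
  have hSR : Summable (intR θ ρ) := (hm.summable.mul_left 2).of_nonneg_of_le hIR
    fun j => by linarith [intL_add_intR θ ρ j, hIL j]
  have hLR : ∑' j, intL θ ρ j + ∑' j, intR θ ρ j = 2 * m :=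
    (hSL.hasSum.add hSR.hasSum).unique (funext (intL_add_intR θ ρ) ▸ hm.mul_left 2)
  have hF := abs_fluxJump_le_two_mul (μ := μ) (Δx := Δx) hfL hf0 hρ hθ0 hθ1
  have ha j := abs_midL_le (lam := lam) hlam.le (hF j) (hIL j)
  have hb j := abs_midR_le (lam := lam) hlam.le (hF j) (hIR j)
  have hA := abs_Amid_sub_Amid_le hΔx hμB hμL (hm.mul_left (2 * (1 + lam * L)))
    (fun l => by linarith [ha l, hb l, intL_add_intR θ ρ l])
  have hg j := abs_fluxJump_le hfL hfM hL0 hM0 hρ hθ0 hθ1 (abs_sdisc_le hθ0 hΔx hρ hm hμB hμL j)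
  set Sg := 2 * θ * L * TV + 2 * θ * M * K * (m + θ * TV)
  have hG : HasSum (fluxJumpBound θ L M K ρ) Sg :=
    (hD.mul_left _).add ((hm.add (hD'.mul_left θ)).mul_left _)
  have hbound := abs_mhUpdate_sub_le hfL hfM hL0 hM0 hα hlam hθ0 hg ha hb hA
  have hbound_hasSum := ((((hD'.add hD).mul_left (1 + θ)).add ((((hasSum_comp_sub_int hG 1).add
    (hG.mul_left 2)).add (hasSum_comp_add_int hG 1)).mul_left (lam / 2))).mul_left
      (L / 2 + α / (2 * lam)) |>.add (((hasSum_comp_sub_int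
        (hSL.hasSum.add (hm.mul_left (lam * L))) 1).add
          (hSR.hasSum.add (hm.mul_left (lam * L)))).mul_left
            (M * (C' * Δx ^ 2 * (2 * (1 + lam * L) * m) / 2) / 2))).mul_left lam
  have hcoef : lam * (L / 2 + α / (2 * lam)) = (lam * L + α) / 2 := by field_simp
  refine (hasSum_le hbound (hbound_hasSum.summable.of_nonneg_of_le (fun _ => abs_nonneg _)
    hbound).hasSum hbound_hasSum).trans_eq ?_
  linear_combination (lam * M * (C' * Δx ^ 2 * (2 * (1 + lam * L) * m) / 2) / 2) * hLR +
    ((1 + θ) * (TV + TV) + lam / 2 * (Sg + 2 * Sg + Sg)) * hcoef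

lemma cfl_bounds {lam L α : ℝ} (hlam : 0 < lam) (hL : 0 ≤ L)
    (hCFL : lam ≤ min ((8 - 27 * α) / (27 * L)) (min (2 / (27 * L)) (α / L))) :
    lam * L ≤ α ∧ lam * L + α ≤ 8 / 27 := by
  have hL0 : 0 < L := hL.lt_of_ne (by rintro rfl; simp at hCFL; linarith)
  have hα := hCFL.trans ((min_le_right _ _).trans (min_le_right _ _))
  have h8 := hCFL.trans (min_le_left _ _)
  rw [le_div_iff₀ hL0] at hα
  rw [le_div_iff₀ (by positivity)] at h8
  exact ⟨hα, by linarith⟩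

lemma variation_bound_le_of_cfl {θ c α lam M C' Δx m TV : ℝ} (hθ0 : 0 ≤ θ) (hθ1 : θ ≤ 1 / 2)
    (hc : 0 ≤ c) (hα : 0 ≤ α) (hcα : c + α ≤ 8 / 27) (hlam : 0 ≤ lam) (hM0 : 0 ≤ M)
    (hC' : 0 ≤ C') (hm : 0 ≤ m) (hTV0 : 0 ≤ TV) (hTV : TV ≤ 2 * m) :
    (c + α) * (1 + θ + 2 * θ * c) * TV + lam * (c + α) * (2 * θ * M * (C' * Δx ^ 2 * m) *
        (m + θ * TV)) + lam * M * (C' * Δx ^ 2 * m) * (1 + c) ^ 2 * m ≤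
      TV + lam * (M * C' * (1 + θ) ^ 2 * (Δx * m) ^ 2 * (α + c + (1 + c) ^ 2)) := by
  have hN : 0 ≤ lam * (M * C' * Δx ^ 2 * m) := by positivity
  have hdiffusion : (c + α) * (1 + θ + 2 * θ * c) ≤ 1 := by
    have hθc : θ * c ≤ 1 / 2 * (8 / 27) := mul_le_mul hθ1 (by linarith) hc (by norm_num)
    nlinarith [mul_le_mul hcα (by linarith : 1 + θ + 2 * θ * c ≤ 1 + 1 / 2 + 8 / 27)
      (by positivity) (by norm_num)]
  have hsource : 2 * θ * (m + θ * TV) ≤ (1 + θ) ^ 2 * m := by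
    have h3θ : 0 ≤ 1 - 3 * θ ^ 2 := by nlinarith
    nlinarith [mul_le_mul_of_nonneg_left hTV (sq_nonneg θ), mul_nonneg h3θ hm]
  have hθsq : 1 ≤ (1 + θ) ^ 2 := by nlinarith
  have h1 := mul_le_mul_of_nonneg_right hdiffusion hTV0
  have h2 := mul_le_mul_of_nonneg_left hsource (mul_nonneg hN (by positivity : 0 ≤ c + α))
  have h3 := mul_le_mul_of_nonneg_left hθsq (mul_nonneg hN (by positivity : 0 ≤ (1 + c) ^ 2 * m))
  linear_combination h1 + h2 + h3

theorem stmt8_general (f : ℝ → ℝ → ℝ) (μ : ℝ → ℝ) (Δx Δt lam θ α L M Cμ' : ℝ)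
    (hΔx : 0 < Δx) (hΔt : 0 < Δt) (hlam : lam = Δt / Δx)
    (hθ0 : 0 ≤ θ) (hθ1 : θ ≤ 1 / 2)
    (hf : ContDiff ℝ 2 (Function.uncurry f)) (hf0 : ∀ A : ℝ, f 0 A = 0)
    (hL : ∀ r A : ℝ, |deriv (fun x => f x A) r| ≤ L)
    (hdA : ∀ r a : ℝ, |deriv (f r) a| ≤ M * |r|)
    (hμ : ContDiff ℝ 2 μ) (hμc : HasCompactSupport μ)
    (hCμ' : ∀ x : ℝ, |deriv μ x| ≤ Cμ')
    (hCFL : lam ≤ min ((8 - 27 * α) / (27 * L)) (min (2 / (27 * L)) (α / L)))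
    (ρ : ℤ → ℝ) (hρ : ∀ j : ℤ, 0 ≤ ρ j) (hsum : Summable ρ) :
    Δx * (∑' j : ℤ, |mhUpdate f μ θ α lam Δx ρ j - ρ j|) ≤
      Δt * ((1 / lam) * (∑' j : ℤ, |ρ (j + 1) - ρ j|) +
        M * Cμ' * (1 + θ) ^ 2 * (Δx * ∑' l : ℤ, ρ l) ^ 2 *
          (α + lam * L + (1 + lam * L) ^ 2)) := by
  have hlam0 : 0 < lam := hlam ▸ div_pos hΔt hΔx
  have hfd := hf.differentiable two_ne_zero
  have hfL (u v A : ℝ) : |f u A - f v A| ≤ L * |u - v| := abs_sub_le_of_abs_deriv_le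
    (hfd.comp (differentiable_id.prodMk (differentiable_const A))) (fun x => hL x A) u v
  have hfM (r a b : ℝ) : |f r a - f r b| ≤ M * |r| * |a - b| := abs_sub_le_of_abs_deriv_le
    (hfd.comp ((differentiable_const r).prodMk differentiable_id)) (hdA r) a b
  obtain ⟨B, hB⟩ := hμ.continuous.bounded_above_of_compact_support hμc
  have hL0 : 0 ≤ L := (abs_nonneg _).trans (hL 0 0)
  have hM0 : 0 ≤ M := by simpa using (abs_nonneg _).trans (hdA 1 0)
  obtain ⟨hcα, hc8⟩ := cfl_bounds hlam0 hL0 hCFL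
  have hα : 0 ≤ α := (mul_nonneg hlam0.le hL0).trans hcα
  have hm := hsum.hasSum
  have hvariation := tsum_abs_mhUpdate_sub_le hΔx hlam0 hθ0 hθ1 hα hL0 hM0 hρ hm
    hfL hfM hf0 (fun x => by simpa using hB x)
    (abs_sub_le_of_abs_deriv_le (hμ.differentiable two_ne_zero) hCμ')
  have hbound := variation_bound_le_of_cfl (Δx := Δx) hθ0 hθ1 (by positivity) hα hc8 hlam0.le
    hM0 ((abs_nonneg _).trans (hCμ' 0)) (tsum_nonneg hρ)
    (tsum_nonneg fun _ => abs_nonneg _) (tsum_abs_succ_sub_le hρ hm)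
  calc Δx * ∑' j, |mhUpdate f μ θ α lam Δx ρ j - ρ j|
      ≤ Δx * (∑' j : ℤ, |ρ (j + 1) - ρ j| + lam * (M * Cμ' * (1 + θ) ^ 2 *
          (Δx * ∑' l : ℤ, ρ l) ^ 2 * (α + lam * L + (1 + lam * L) ^ 2))) :=
        mul_le_mul_of_nonneg_left (hvariation.trans hbound) hΔx.le
    _ = _ := by rw [hlam]; field_simp

/-- one-step L¹-Lipschitz continuity in time. -/
theorem stmt8 (f : ℝ → ℝ → ℝ) (μ : ℝ → ℝ) (Δx Δt lam θ α L M Cμ' : ℝ)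
    (hΔx : 0 < Δx) (hΔt : 0 < Δt) (hlam : lam = Δt / Δx)
    (hθ0 : 0 ≤ θ) (hθ1 : θ ≤ 1 / 2) (hα0 : 0 < α) (hα1 : α < 8 / 27)
    (hf : ContDiff ℝ 2 (Function.uncurry f)) (hf0 : ∀ A : ℝ, f 0 A = 0)
    (hL : ∀ r A : ℝ, |deriv (fun x => f x A) r| ≤ L)
    (hM : 0 < M) (hdA : ∀ r a : ℝ, |deriv (f r) a| ≤ M * |r|)
    (hdAA : ∀ r a : ℝ, |iteratedDeriv 2 (f r) a| ≤ M * |r|)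
    (hμ : ContDiff ℝ 2 μ) (hμc : HasCompactSupport μ)
    (hCμ' : ∀ x : ℝ, |deriv μ x| ≤ Cμ')
    (hCFL : lam ≤ min ((8 - 27 * α) / (27 * L)) (min (2 / (27 * L)) (α / L)))
    (ρ : ℤ → ℝ) (hρ : ∀ j : ℤ, 0 ≤ ρ j) (hsum : Summable ρ)
    (hTV : Summable (fun j : ℤ => |ρ (j + 1) - ρ j|)) :
    Δx * (∑' j : ℤ, |mhUpdate f μ θ α lam Δx ρ j - ρ j|) ≤
      Δt * ((1 / lam) * (∑' j : ℤ, |ρ (j + 1) - ρ j|) +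
        M * Cμ' * (1 + θ) ^ 2 * (Δx * ∑' l : ℤ, ρ l) ^ 2 *
          (α + lam * L + (1 + lam * L) ^ 2)) :=
  stmt8_general f μ Δx Δt lam θ α L M Cμ' hΔx hΔt hlam hθ0 hθ1 hf hf0 hL hdA hμ hμc hCμ' hCFL ρ hρ
    hsum
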